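/- arXiv:0709.0109 — 2 statements merged into one kernel-verified Lean document; each statement's English description precedes it below -/
import Mathlib

section
/- For any vectors v_1, ..., v_m in a Euclidean space E with \sum_i \|v_i\|^2 \le 1, and any vectors u_1, ..., u_m with \sum_i u_i = 0 and \sum_i \|u_i\|^2 \le 1, one has \sum_i \langle u_i, v_i \rangle \le \sqrt{\sum_i \|v_i\|^2 - (1/m)\|\sum_i v_i\|^2}. -/
/-!
Subtracting the mean `c = m⁻¹ • ∑ vᵢ` from every `vᵢ` does not change `∑ ⟪uᵢ, vᵢ⟫`, because
`∑ uᵢ = 0`, and it turns `∑ ‖vᵢ‖²` into `∑ ‖vᵢ‖² - m⁻¹ ‖∑ vᵢ‖²`. Cauchy–Schwarz applied to the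
centred vectors then gives the bound.
-/

open RealInnerProductSpace Finset

section

variable {ι E : Type*} [NormedAddCommGroup E] [InnerProductSpace ℝ E]

theorem sum_inner_le_sqrt_mul_sqrt (s : Finset ι) (u w : ι → E) :
    ∑ i ∈ s, ⟪u i, w i⟫ ≤ √(∑ i ∈ s, ‖u i‖ ^ 2) * √(∑ i ∈ s, ‖w i‖ ^ 2) :=
  (sum_le_sum fun i _ => real_inner_le_norm (u i) (w i)).trans
    (Real.sum_mul_le_sqrt_mul_sqrt s _ _)

theorem sum_inner_sub_const_of_sum_eq_zero (s : Finset ι) (u v : ι → E) (c : E)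
    (hu : ∑ i ∈ s, u i = 0) : ∑ i ∈ s, ⟪u i, v i - c⟫ = ∑ i ∈ s, ⟪u i, v i⟫ := by
  simp only [inner_sub_right, sum_sub_distrib, ← sum_inner, hu, inner_zero_left, sub_zero]

theorem sum_norm_sub_mean_sq [Fintype ι] (v : ι → E) :
    ∑ i, ‖v i - (Fintype.card ι : ℝ)⁻¹ • ∑ j, v j‖ ^ 2
      = ∑ i, ‖v i‖ ^ 2 - (1 / (Fintype.card ι : ℝ)) * ‖∑ i, v i‖ ^ 2 := by
  simp only [norm_sub_sq_real, sum_add_distrib, sum_sub_distrib, ← mul_sum, ← sum_inner,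
    real_inner_smul_right, real_inner_self_eq_norm_sq, sum_const, card_univ, nsmul_eq_mul,
    norm_smul, Real.norm_eq_abs, abs_inv, Nat.abs_cast]
  set n : ℝ := (Fintype.card ι : ℝ)
  -- true also for an empty `ι`, since `0⁻¹ = 0`
  have hn : n * n⁻¹ ^ 2 = n⁻¹ := by
    rw [sq, ← mul_assoc, mul_comm n]; simpa using mul_inv_mul_cancel n⁻¹
  linear_combination ‖∑ j, v j‖ ^ 2 * hn

end

theorem inner_sum_le_sqrt_general (E : Type*) [NormedAddCommGroup E] [InnerProductSpace ℝ E]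
    (m : ℕ) (u v : Fin m → E)
    (hu1 : ∑ i, ‖u i‖ ^ 2 ≤ 1)
    (hu0 : ∑ i, u i = 0) :
    ∑ i, ⟪u i, v i⟫ ≤ Real.sqrt (∑ i, ‖v i‖ ^ 2 - (1 / (m : ℝ)) * ‖∑ i, v i‖ ^ 2) := by
  set w : Fin m → E := fun i => v i - (m : ℝ)⁻¹ • ∑ j, v j
  calc ∑ i, ⟪u i, v i⟫ = ∑ i, ⟪u i, w i⟫ :=
        (sum_inner_sub_const_of_sum_eq_zero _ u v _ hu0).symm
    _ ≤ √(∑ i, ‖u i‖ ^ 2) * √(∑ i, ‖w i‖ ^ 2) := sum_inner_le_sqrt_mul_sqrt _ u w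
    _ ≤ 1 * √(∑ i, ‖w i‖ ^ 2) := by gcongr; exact Real.sqrt_le_one.mpr hu1
    _ = √(∑ i, ‖v i‖ ^ 2 - (1 / (m : ℝ)) * ‖∑ i, v i‖ ^ 2) := by
        have centred := sum_norm_sub_mean_sq v
        rw [Fintype.card_fin] at centred
        rw [one_mul, centred]

theorem inner_sum_le_sqrt (E : Type*) [NormedAddCommGroup E] [InnerProductSpace ℝ E]
    (m : ℕ) (hm : 0 < m) (u v : Fin m → E)
    (hu1 : ∑ i, ‖u i‖ ^ 2 ≤ 1) (hv1 : ∑ i, ‖v i‖ ^ 2 ≤ 1)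
    (hu0 : ∑ i, u i = 0) :
    ∑ i, ⟪u i, v i⟫ ≤ Real.sqrt (∑ i, ‖v i‖ ^ 2 - (1 / (m : ℝ)) * ‖∑ i, v i‖ ^ 2) :=
  inner_sum_le_sqrt_general E m u v hu1 hu0
end

section
/- Let C and F be nonempty closed subsets of a Euclidean space E with C convex, and let \bar{x} \in F \cap C. Suppose for constants c \in (0,1) and \epsilon > 0: for all x \in F \cap B_\epsilon(\bar x), w \in E with x a nearest point of F to w, y \in C \cap B_\epsilon(\bar x), and v \in E with y a nearest point of C to y + v, one has \langle w - x, -v \rangle \le c \|w - x\| \|v\|. Then for any x_0 \in C with \|x_0 - \bar{x}\| \le \epsilon(1-c)/4, every alternating projection sequence x_{2n+1} \in P_F(x_{2n}), x_{2n+2} = P_C(x_{2n+1}) satisfies \|x_{2n+1} - x_{2n}\| \le \|x_0 - \bar x\| c^n for all n, and converges to a point \hat{x} \in F \cap C with \|\hat x - x_0\| \le \frac{1+c}{1-c}\|x_0 - \bar x\|. -/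
open RealInnerProductSpace Metric Filter Topology

set_option maxHeartbeats 1600000 in
theorem alternating_projections_convex_case (E : Type*) [NormedAddCommGroup E]
    [InnerProductSpace ℝ E] [FiniteDimensional ℝ E]
    (F C : Set E) (hFc : IsClosed F) (hCc : IsClosed C) (hCconv : Convex ℝ C)
    (xbar : E) (hxbarF : xbar ∈ F) (hxbarC : xbar ∈ C)
    (c ε : ℝ) (hc0 : 0 < c) (hc1 : c < 1) (hε : 0 < ε)
    (hangle : ∀ x ∈ F ∩ closedBall xbar ε, ∀ w : E,
        (x ∈ F ∧ dist w x = infDist w F) →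
      ∀ y ∈ C ∩ closedBall xbar ε, ∀ v : E,
        (y ∈ C ∧ dist (y + v) y = infDist (y + v) C) →
      ⟪w - x, -v⟫ ≤ c * ‖w - x‖ * ‖v‖)
    (x : ℕ → E) (hx0C : x 0 ∈ C) (hx0 : ‖x 0 - xbar‖ ≤ ε * (1 - c) / 4)
    (hodd : ∀ n : ℕ, x (2 * n + 1) ∈ F ∧
      dist (x (2 * n)) (x (2 * n + 1)) = infDist (x (2 * n)) F)
    (heven : ∀ n : ℕ, x (2 * n + 2) ∈ C ∧
      dist (x (2 * n + 1)) (x (2 * n + 2)) = infDist (x (2 * n + 1)) C) :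
    (∀ n : ℕ, ‖x (2 * n + 1) - x (2 * n)‖ ≤ ‖x 0 - xbar‖ * c ^ n) ∧
    ∃ xhat ∈ F ∩ C, Tendsto x atTop (𝓝 xhat) ∧
      ‖xhat - x 0‖ ≤ (1 + c) / (1 - c) * ‖x 0 - xbar‖ := by
  obtain ⟨D, hDdef⟩ : ∃ D : ℝ, D = ‖x 0 - xbar‖ := ⟨_, rfl⟩
  rw [← hDdef] at hx0 ⊢
  have hD0 : 0 ≤ D := hDdef ▸ norm_nonneg _
  have h1c : 0 < 1 - c := by linarith
  -- all even iterates are in C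
  have hxC : ∀ n : ℕ, x (2 * n) ∈ C := by
    intro n
    cases n with
    | zero => simpa using hx0C
    | succ m =>
      have h := (heven m).1
      have : 2 * (m + 1) = 2 * m + 2 := by ring
      rw [this]; exact h
  -- e_n ≤ d_n
  have hed : ∀ n : ℕ, ‖x (2 * n + 2) - x (2 * n + 1)‖ ≤ ‖x (2 * n + 1) - x (2 * n)‖ := by
    intro n
    have h1 : dist (x (2 * n + 1)) (x (2 * n + 2)) = infDist (x (2 * n + 1)) C := (heven n).2
    have h2 : infDist (x (2 * n + 1)) C ≤ dist (x (2 * n + 1)) (x (2 * n)) :=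
      infDist_le_dist_of_mem (hxC n)
    calc ‖x (2 * n + 2) - x (2 * n + 1)‖
        = dist (x (2 * n + 1)) (x (2 * n + 2)) := by rw [dist_eq_norm, norm_sub_rev]
      _ ≤ dist (x (2 * n + 1)) (x (2 * n)) := h1 ▸ h2
      _ = ‖x (2 * n + 1) - x (2 * n)‖ := dist_eq_norm _ _
  -- d_{n+1} ≤ e_n
  have hde : ∀ n : ℕ, ‖x (2 * n + 3) - x (2 * n + 2)‖ ≤ ‖x (2 * n + 2) - x (2 * n + 1)‖ := by
    intro n
    have h := hodd (n + 1)
    rw [show 2 * (n + 1) + 1 = 2 * n + 3 by ring, show 2 * (n + 1) = 2 * n + 2 by ring] at h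
    have h2 : infDist (x (2 * n + 2)) F ≤ dist (x (2 * n + 2)) (x (2 * n + 1)) :=
      infDist_le_dist_of_mem (hodd n).1
    calc ‖x (2 * n + 3) - x (2 * n + 2)‖
        = dist (x (2 * n + 2)) (x (2 * n + 3)) := by rw [dist_eq_norm, norm_sub_rev]
      _ ≤ dist (x (2 * n + 2)) (x (2 * n + 1)) := h.2 ▸ h2
      _ = ‖x (2 * n + 2) - x (2 * n + 1)‖ := dist_eq_norm _ _
  -- d_0 ≤ D
  have hd0 : ‖x 1 - x 0‖ ≤ D := by
    have h1 := (hodd 0).2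
    norm_num at h1
    have h2 : infDist (x 0) F ≤ dist (x 0) xbar := infDist_le_dist_of_mem hxbarF
    calc ‖x 1 - x 0‖ = dist (x 0) (x 1) := by rw [dist_eq_norm, norm_sub_rev]
      _ ≤ dist (x 0) xbar := h1 ▸ h2
      _ = D := by rw [dist_eq_norm]; exact hDdef.symm
  -- the key angle-condition step
  have hkeystep : ∀ n : ℕ, ‖x (2 * n + 1) - xbar‖ ≤ ε → ‖x (2 * n + 2) - xbar‖ ≤ ε →
      ‖x (2 * n + 2) - x (2 * n + 1)‖ ≤ c * ‖x (2 * n + 1) - x (2 * n)‖ := by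
    intro n hb1 hb2
    set a := x (2 * n) with ha
    set b := x (2 * n + 1) with hb
    set p := x (2 * n + 2) with hp
    haveI : Nonempty C := ⟨⟨xbar, hxbarC⟩⟩
    have hvar : ∀ w ∈ C, ⟪b - p, w - p⟫ ≤ 0 := by
      have h := (heven n).2
      rw [infDist_eq_iInf] at h
      have h1 : ‖b - p‖ = ⨅ w : C, ‖b - w‖ := by
        simpa [dist_eq_norm] using h
      exact (norm_eq_iInf_iff_real_inner_le_zero hCconv (heven n).1).mp h1
    have hang : ⟪a - b, -(b - p)⟫ ≤ c * ‖a - b‖ * ‖b - p‖ := by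
      apply hangle b ⟨(hodd n).1, by rwa [mem_closedBall, dist_eq_norm]⟩ a
        ⟨(hodd n).1, (hodd n).2⟩ p ⟨(heven n).1, by rwa [mem_closedBall, dist_eq_norm]⟩
        (b - p)
      refine ⟨(heven n).1, ?_⟩
      have : p + (b - p) = b := by abel
      rw [this]
      exact (heven n).2
    have hsum : ⟪b - p, b - p⟫ = ⟪b - p, b - a⟫ + ⟪b - p, a - p⟫ := by
      rw [← inner_add_right]
      congr 1
      abel
    have h2 : ⟪b - p, a - p⟫ ≤ 0 := hvar a (hxC n)
    have hlin : ⟪a - b, -(b - p)⟫ = ⟪b - p, b - a⟫ := by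
      rw [← neg_sub a b, inner_neg_right, inner_neg_right, neg_inj]
      exact real_inner_comm _ _
    have hsq : ‖b - p‖ ^ 2 ≤ c * ‖a - b‖ * ‖b - p‖ := by
      rw [← real_inner_self_eq_norm_sq]
      calc ⟪b - p, b - p⟫ ≤ ⟪b - p, b - a⟫ := by rw [hsum]; linarith
        _ = ⟪a - b, -(b - p)⟫ := hlin.symm
        _ ≤ c * ‖a - b‖ * ‖b - p‖ := hang
    have hgoal : ‖p - b‖ ≤ c * ‖b - a‖ := by
      rcases (norm_nonneg (b - p)).eq_or_lt with h0 | h0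
      · have h00 : ‖p - b‖ = 0 := by rw [norm_sub_rev]; exact h0.symm
        rw [h00]
        positivity
      · have h5 : ‖b - p‖ * ‖b - p‖ ≤ (c * ‖a - b‖) * ‖b - p‖ := by nlinarith [hsq]
        have h6 : ‖b - p‖ ≤ c * ‖a - b‖ := le_of_mul_le_mul_right h5 h0
        calc ‖p - b‖ = ‖b - p‖ := norm_sub_rev _ _
          _ ≤ c * ‖a - b‖ := h6
          _ = c * ‖b - a‖ := by rw [norm_sub_rev]
    exact hgoal
  -- main induction
  have key : ∀ n : ℕ, ‖x (2 * n + 1) - x (2 * n)‖ ≤ D * c ^ n ∧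
      ‖x (2 * n + 2) - x (2 * n + 1)‖ ≤ D * c ^ (n + 1) ∧
      (1 - c) * ‖x (2 * n) - x 0‖ ≤ (1 + c) * (1 - c ^ n) * D := by
    intro n
    induction n with
    | zero =>
      have hd : ‖x (2 * 0 + 1) - x (2 * 0)‖ ≤ D * c ^ 0 := by norm_num; exact hd0
      have hb1' : ‖x 1 - xbar‖ ≤ 2 * D := by
        have h1 : ‖x 1 - xbar‖ ≤ ‖x 1 - x 0‖ + ‖x 0 - xbar‖ :=
          norm_sub_le_norm_sub_add_norm_sub _ _ _
        rw [← hDdef] at h1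
        linarith [hd0]
      have hb1 : ‖x (2 * 0 + 1) - xbar‖ ≤ ε := by
        norm_num
        nlinarith [hb1', hx0, mul_pos hε hc0]
      have hb2 : ‖x (2 * 0 + 2) - xbar‖ ≤ ε := by
        have h1 : ‖x 2 - xbar‖ ≤ ‖x 2 - x 1‖ + ‖x 1 - xbar‖ :=
          norm_sub_le_norm_sub_add_norm_sub _ _ _
        have h2 := hed 0
        norm_num at h2
        norm_num
        nlinarith [hb1', hd0, h1, h2, hx0, mul_pos hε hc0]
      have he := hkeystep 0 hb1 hb2
      have hdn : ‖x (2 * 0 + 1) - x (2 * 0)‖ ≤ D := by norm_num; exact hd0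
      refine ⟨hd, ?_, ?_⟩
      · calc ‖x (2 * 0 + 2) - x (2 * 0 + 1)‖ ≤ c * ‖x (2 * 0 + 1) - x (2 * 0)‖ := he
          _ ≤ c * D := mul_le_mul_of_nonneg_left hdn hc0.le
          _ = D * c ^ (0 + 1) := by ring
      · norm_num
    | succ n ih =>
      obtain ⟨ihd, ihe, ihs⟩ := ih
      have hcn : (0:ℝ) ≤ c ^ n := by positivity
      have hcn1 : c ^ n ≤ 1 := pow_le_one₀ hc0.le hc1.le
      have hq0 : (0:ℝ) ≤ c ^ (n + 1) := by positivity
      have hq1 : c ^ (n + 1) ≤ 1 := pow_le_one₀ hc0.le hc1.le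
      have hqc : c ^ (n + 1) ≤ c := by
        calc c ^ (n + 1) ≤ c ^ 1 := pow_le_pow_of_le_one hc0.le hc1.le (by omega)
          _ = c := pow_one c
      have idx1 : 2 * (n + 1) = 2 * n + 2 := by ring
      have idx2 : 2 * (n + 1) + 1 = 2 * n + 3 := by ring
      have idx3 : 2 * (n + 1) + 2 = 2 * n + 4 := by ring
      -- distance of x(2n+2) from x 0
      have htri : ‖x (2 * n + 2) - x 0‖ ≤ ‖x (2 * n + 2) - x (2 * n + 1)‖ +
          (‖x (2 * n + 1) - x (2 * n)‖ + ‖x (2 * n) - x 0‖) := by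
        have t1 := norm_sub_le_norm_sub_add_norm_sub (x (2 * n + 2)) (x (2 * n + 1)) (x 0)
        have t2 := norm_sub_le_norm_sub_add_norm_sub (x (2 * n + 1)) (x (2 * n)) (x 0)
        linarith
      have hs' : (1 - c) * ‖x (2 * n + 2) - x 0‖ ≤ (1 + c) * (1 - c ^ (n + 1)) * D := by
        have m3 := mul_le_mul_of_nonneg_left htri h1c.le
        have m1 := mul_le_mul_of_nonneg_left ihe h1c.le
        have m2 := mul_le_mul_of_nonneg_left ihd h1c.le
        rw [pow_succ] at m1 ⊢
        nlinarith [ihs, m1, m2, m3]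
      have hsb : ‖x (2 * n + 2) - x 0‖ ≤ 2 * D / (1 - c) := by
        rw [le_div_iff₀ h1c]
        nlinarith [hs', mul_nonneg hq0 hD0, mul_nonneg (mul_nonneg hc0.le hq0) hD0,
          mul_nonneg hD0 h1c.le]
      have hd' : ‖x (2 * n + 3) - x (2 * n + 2)‖ ≤ D * c ^ (n + 1) := (hde n).trans ihe
      have hdD : ‖x (2 * n + 3) - x (2 * n + 2)‖ ≤ D := by
        have : D * c ^ (n + 1) ≤ D * 1 := mul_le_mul_of_nonneg_left hq1 hD0
        linarith [hd']
      have k1 : 2 * D / (1 - c) ≤ ε / 2 := by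
        rw [div_le_iff₀ h1c]
        nlinarith [hx0, mul_pos hε hc0]
      have k2 : D ≤ ε / 4 := by nlinarith [hx0, mul_pos hε hc0]
      have hb1 : ‖x (2 * n + 3) - xbar‖ ≤ ε := by
        have t1 : ‖x (2 * n + 3) - xbar‖ ≤ ‖x (2 * n + 3) - x (2 * n + 2)‖ +
            (‖x (2 * n + 2) - x 0‖ + ‖x 0 - xbar‖) := by
          have u1 := norm_sub_le_norm_sub_add_norm_sub (x (2 * n + 3)) (x (2 * n + 2)) xbar
          have u2 := norm_sub_le_norm_sub_add_norm_sub (x (2 * n + 2)) (x 0) xbar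
          linarith
        rw [← hDdef] at t1
        linarith [hsb, hdD, k1, k2]
      have hee : ‖x (2 * n + 4) - x (2 * n + 3)‖ ≤ ‖x (2 * n + 3) - x (2 * n + 2)‖ := by
        have h := hed (n + 1)
        rw [idx3, idx2, idx1] at h
        exact h
      have hb2 : ‖x (2 * n + 4) - xbar‖ ≤ ε := by
        have t1 : ‖x (2 * n + 4) - x 0‖ ≤ ‖x (2 * n + 4) - x (2 * n + 3)‖ +
            (‖x (2 * n + 3) - x (2 * n + 2)‖ + ‖x (2 * n + 2) - x 0‖) := by
          have u1 := norm_sub_le_norm_sub_add_norm_sub (x (2 * n + 4)) (x (2 * n + 3)) (x 0)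
          have u2 := norm_sub_le_norm_sub_add_norm_sub (x (2 * n + 3)) (x (2 * n + 2)) (x 0)
          linarith
        have u3 : (1 - c) * ‖x (2 * n + 4) - x 0‖ ≤ 3 * D := by
          have m0 := mul_le_mul_of_nonneg_left t1 h1c.le
          have m1 := mul_le_mul_of_nonneg_left (hee.trans hd') h1c.le
          have m2 := mul_le_mul_of_nonneg_left hd' h1c.le
          nlinarith [hs', mul_le_mul_of_nonneg_left hqc hD0,
            mul_nonneg (mul_nonneg hc0.le hD0) hq0, mul_nonneg hD0 h1c.le,
            mul_nonneg (mul_nonneg hc0.le hc0.le) (mul_nonneg hD0 hq0)]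
        have u4 : ‖x (2 * n + 4) - x 0‖ ≤ 3 * D / (1 - c) := by
          rw [le_div_iff₀ h1c]
          nlinarith [u3]
        have k3 : 3 * D / (1 - c) ≤ 3 * ε / 4 := by
          rw [div_le_iff₀ h1c]
          nlinarith [hx0, mul_pos hε hc0]
        have t2 : ‖x (2 * n + 4) - xbar‖ ≤ ‖x (2 * n + 4) - x 0‖ + ‖x 0 - xbar‖ :=
          norm_sub_le_norm_sub_add_norm_sub _ _ _
        rw [← hDdef] at t2
        linarith [u4, k3, k2]
      have hkey := hkeystep (n + 1)
      rw [idx3, idx2, idx1] at hkey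
      have he' : ‖x (2 * n + 4) - x (2 * n + 3)‖ ≤ c * ‖x (2 * n + 3) - x (2 * n + 2)‖ :=
        hkey hb1 hb2
      refine ⟨?_, ?_, ?_⟩
      · rw [idx2, idx1]; exact hd'
      · rw [idx2, idx3]
        calc ‖x (2 * n + 4) - x (2 * n + 3)‖ ≤ c * ‖x (2 * n + 3) - x (2 * n + 2)‖ := he'
          _ ≤ c * (D * c ^ (n + 1)) := mul_le_mul_of_nonneg_left hd' hc0.le
          _ = D * c ^ (n + 1 + 1) := by ring
      · rw [idx1]; exact hs'
  -- Cauchy sequence via geometric bound with ratio √c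
  have hsqc0 : 0 ≤ Real.sqrt c := Real.sqrt_nonneg c
  have hsqc1 : Real.sqrt c < 1 := by
    rw [show (1:ℝ) = Real.sqrt 1 by simp]
    exact Real.sqrt_lt_sqrt hc0.le hc1
  have hsq2 : ∀ k : ℕ, (Real.sqrt c) ^ (2 * k) = c ^ k := by
    intro k
    rw [pow_mul, Real.sq_sqrt hc0.le]
  have hstep : ∀ m : ℕ, dist (x m) (x (m + 1)) ≤ D * (Real.sqrt c) ^ m := by
    intro m
    rcases Nat.even_or_odd m with ⟨k, hk⟩ | ⟨k, hk⟩
    · have hm : m = 2 * k := by omega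
      subst hm
      have := (key k).1
      calc dist (x (2 * k)) (x (2 * k + 1)) = ‖x (2 * k + 1) - x (2 * k)‖ := by
            rw [dist_eq_norm, norm_sub_rev]
        _ ≤ D * c ^ k := this
        _ = D * (Real.sqrt c) ^ (2 * k) := by rw [hsq2]
    · have hm : m = 2 * k + 1 := by omega
      subst hm
      have := (key k).2.1
      calc dist (x (2 * k + 1)) (x (2 * k + 1 + 1)) = ‖x (2 * k + 2) - x (2 * k + 1)‖ := by
            rw [dist_eq_norm, norm_sub_rev]
        _ ≤ D * c ^ (k + 1) := this
        _ = D * (Real.sqrt c) ^ (2 * (k + 1)) := by rw [hsq2]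
        _ ≤ D * (Real.sqrt c) ^ (2 * k + 1) := by
            apply mul_le_mul_of_nonneg_left _ hD0
            exact pow_le_pow_of_le_one hsqc0 hsqc1.le (by omega)
  have hcauchy : CauchySeq x := cauchySeq_of_le_geometric _ D hsqc1 hstep
  obtain ⟨xhat, hxhat⟩ := cauchySeq_tendsto_of_complete hcauchy
  have h2n : Tendsto (fun n => x (2 * n)) atTop (𝓝 xhat) :=
    hxhat.comp (tendsto_atTop_mono (fun n => by simp only [id_eq]; omega) tendsto_id)
  have h2n1 : Tendsto (fun n => x (2 * n + 1)) atTop (𝓝 xhat) :=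
    hxhat.comp (tendsto_atTop_mono (fun n => by simp only [id_eq]; omega) tendsto_id)
  have hxhatF : xhat ∈ F := hFc.mem_of_tendsto h2n1 (Eventually.of_forall fun n => (hodd n).1)
  have hxhatC : xhat ∈ C := hCc.mem_of_tendsto h2n (Eventually.of_forall hxC)
  have hball : ∀ m : ℕ, x m ∈ closedBall (x 0) ((1 + c) / (1 - c) * D) := by
    intro m
    rw [mem_closedBall, dist_eq_norm]
    rw [div_mul_eq_mul_div, le_div_iff₀ h1c]
    rcases Nat.even_or_odd m with ⟨k, hk⟩ | ⟨k, hk⟩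
    · have hm : m = 2 * k := by omega
      subst hm
      have := (key k).2.2
      have hcn : (0:ℝ) ≤ c ^ k := by positivity
      have hcn1 : c ^ k ≤ 1 := pow_le_one₀ hc0.le hc1.le
      nlinarith [norm_nonneg (x (2 * k) - x 0), mul_nonneg hD0 hcn,
        mul_nonneg (mul_nonneg hc0.le hD0) hcn]
    · have hm : m = 2 * k + 1 := by omega
      subst hm
      have h1 := (key k).1
      have h2 := (key k).2.2
      have hcn : (0:ℝ) ≤ c ^ k := by positivity
      have hcn1 : c ^ k ≤ 1 := pow_le_one₀ hc0.le hc1.le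
      have htri : ‖x (2 * k + 1) - x 0‖ ≤ ‖x (2 * k + 1) - x (2 * k)‖ + ‖x (2 * k) - x 0‖ :=
        norm_sub_le_norm_sub_add_norm_sub _ _ _
      nlinarith [norm_nonneg (x (2 * k) - x 0), norm_nonneg (x (2 * k + 1) - x (2 * k)),
        mul_le_mul_of_nonneg_left h1 h1c.le, mul_le_mul_of_nonneg_left htri h1c.le,
        mul_nonneg (mul_nonneg hc0.le hD0) hcn, mul_nonneg hD0 hcn]
  have hxhatball : xhat ∈ closedBall (x 0) ((1 + c) / (1 - c) * D) :=
    Metric.isClosed_closedBall.mem_of_tendsto hxhat (Eventually.of_forall hball)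
  refine ⟨fun n => (key n).1, xhat, ⟨hxhatF, hxhatC⟩, hxhat, ?_⟩
  rw [mem_closedBall, dist_eq_norm] at hxhatball
  exact hxhatball
end
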